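/- arXiv:2211.04851 — 3 statements merged into one kernel-verified Lean document; each statement's English description precedes it below -/
import Mathlib

section
/- Let E₁ ⊆ V₁×W₁ and E₂ ⊆ V₂×W₂ be hypergraphs. There exists a local NS correlation over (V₂,W₁,V₁,W₂) fitting the game E₁⇝E₂ if and only if there exist functions f : V₂ → V₁ and g : W₁ → W₂ such that for all v₂∈V₂ and w₁∈W₁, (f(v₂),w₁)∈E₁ implies (v₂,g(w₁))∈E₂. -/
/-- A channel from `V` to `W` : `E v w` stands for `𝓔(w|v)`. -/
def IsChannel {V W : Type*} [Fintype W] (E : V → W → ℝ) : Prop :=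
  (∀ v w, 0 ≤ E v w) ∧ ∀ v, ∑ w, E v w = 1

/-- A no-signalling correlation over `(V₂, W₁, V₁, W₂)`: `Γ v₂ w₁ v₁ w₂` stands for
`Γ(v₁, w₂ | v₂, w₁)`. -/
def IsNSCorr {V₂ W₁ V₁ W₂ : Type*} [Fintype V₁] [Fintype W₂]
    (Γ : V₂ → W₁ → V₁ → W₂ → ℝ) : Prop :=
  (∀ v₂ w₁ v₁ w₂, 0 ≤ Γ v₂ w₁ v₁ w₂) ∧
  (∀ v₂ w₁, ∑ v₁, ∑ w₂, Γ v₂ w₁ v₁ w₂ = 1) ∧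
  (∀ v₂ w₁ w₁' v₁, ∑ w₂, Γ v₂ w₁ v₁ w₂ = ∑ w₂, Γ v₂ w₁' v₁ w₂) ∧
  (∀ v₂ v₂' w₁ w₂, ∑ v₁, Γ v₂ w₁ v₁ w₂ = ∑ v₁, Γ v₂' w₁ v₁ w₂)

/-- A local correlation: a finite convex combination of products of channels. -/
def IsLocalCorr {V₂ W₁ V₁ W₂ : Type*} [Fintype V₁] [Fintype W₂]
    (Γ : V₂ → W₁ → V₁ → W₂ → ℝ) : Prop :=
  ∃ (n : ℕ) (lam : Fin n → ℝ) (Φ : Fin n → V₂ → V₁ → ℝ) (Ψ : Fin n → W₁ → W₂ → ℝ),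
    (∀ i, 0 ≤ lam i) ∧ (∑ i, lam i = 1) ∧
    (∀ i, IsChannel (Φ i)) ∧ (∀ i, IsChannel (Ψ i)) ∧
    ∀ v₂ w₁ v₁ w₂, Γ v₂ w₁ v₁ w₂ = ∑ i, lam i * (Φ i v₂ v₁ * Ψ i w₁ w₂)

/-- `Γ` fits the quasi-homomorphism game `E₁ ⇝ E₂`. -/
def FitsQuasiHom {V₁ W₁ V₂ W₂ : Type*} (Γ : V₂ → W₁ → V₁ → W₂ → ℝ)
    (E₁ : Set (V₁ × W₁)) (E₂ : Set (V₂ × W₂)) : Prop :=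
  ∀ v₂ w₁ v₁ w₂, 0 < Γ v₂ w₁ v₁ w₂ → (v₁, w₁) ∈ E₁ → (v₂, w₂) ∈ E₂

/-!
A local correlation is a mixture of products of channels. Fix a component of positive weight and,
for each input, an output of positive probability under each of its two channels: this gives
`f : V₂ → V₁` and `g : W₁ → W₂` such that `Γ(f v₂, g w₁ | v₂, w₁) > 0`, so a fitting `Γ` makes
`(f, g)` a classical quasi-homomorphism. Conversely `(f, g)` yields the deterministic product
correlation `δ_{v₁, f v₂} δ_{w₂, g w₁}`, which is local, no-signalling and fits `E₁ ⇝ E₂`.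
-/

theorem exists_pos_of_sum_eq_one {ι : Type*} [Fintype ι] {p : ι → ℝ} (hp : ∑ i, p i = 1) :
    ∃ i, 0 < p i :=
  (Finset.exists_lt_of_sum_lt (s := Finset.univ) (f := 0) (g := p) (by simp [hp])).imp
    fun _ ⟨_, h⟩ => h

def detChannel {V W : Type*} [DecidableEq W] (f : V → W) : V → W → ℝ :=
  fun v w => if w = f v then 1 else 0

theorem isChannel_detChannel {V W : Type*} [Fintype W] [DecidableEq W] (f : V → W) :
    IsChannel (detChannel f) :=
  ⟨fun v w => by unfold detChannel; split_ifs <;> norm_num, fun v => by simp [detChannel]⟩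

theorem detChannel_ne_zero {V W : Type*} [DecidableEq W] {f : V → W} {v : V} {w : W}
    (h : detChannel f v w ≠ 0) : w = f v := by
  by_contra hw
  exact h (if_neg hw)

def prodCorr {V₂ W₁ V₁ W₂ : Type*} (Φ : V₂ → V₁ → ℝ) (Ψ : W₁ → W₂ → ℝ) :
    V₂ → W₁ → V₁ → W₂ → ℝ :=
  fun v₂ w₁ v₁ w₂ => Φ v₂ v₁ * Ψ w₁ w₂

section prodCorr

variable {V₂ W₁ V₁ W₂ : Type*} [Fintype V₁] [Fintype W₂]
  {Φ : V₂ → V₁ → ℝ} {Ψ : W₁ → W₂ → ℝ}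

theorem IsChannel.isNSCorr_prodCorr (hΦ : IsChannel Φ) (hΨ : IsChannel Ψ) :
    IsNSCorr (prodCorr Φ Ψ) := by
  refine ⟨fun v₂ w₁ v₁ w₂ => mul_nonneg (hΦ.1 v₂ v₁) (hΨ.1 w₁ w₂), fun v₂ w₁ => ?_,
    fun v₂ w₁ w₁' v₁ => ?_, fun v₂ v₂' w₁ w₂ => ?_⟩ <;>
    simp only [prodCorr, ← Finset.mul_sum, ← Finset.sum_mul, hΦ.2, hΨ.2, one_mul]

theorem IsChannel.isLocalCorr_prodCorr (hΦ : IsChannel Φ) (hΨ : IsChannel Ψ) :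
    IsLocalCorr (prodCorr Φ Ψ) :=
  ⟨1, fun _ => 1, fun _ => Φ, fun _ => Ψ, fun _ => zero_le_one, by simp,
    fun _ => hΦ, fun _ => hΨ, fun _ _ _ _ => by simp [prodCorr]⟩

end prodCorr

theorem fitsQuasiHom_prodCorr_detChannel {V₁ W₁ V₂ W₂ : Type*} [DecidableEq V₁]
    [DecidableEq W₂] {E₁ : Set (V₁ × W₁)} {E₂ : Set (V₂ × W₂)} {f : V₂ → V₁} {g : W₁ → W₂}
    (hfg : ∀ v₂ w₁, (f v₂, w₁) ∈ E₁ → (v₂, g w₁) ∈ E₂) :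
    FitsQuasiHom (prodCorr (detChannel f) (detChannel g)) E₁ E₂ := by
  intro v₂ w₁ v₁ w₂ hpos hE
  obtain ⟨hv, hw⟩ := mul_ne_zero_iff.mp hpos.ne'
  rw [detChannel_ne_zero hv] at hE
  rw [detChannel_ne_zero hw]
  exact hfg v₂ w₁ hE

theorem IsLocalCorr.exists_pos_apply {V₂ W₁ V₁ W₂ : Type*} [Fintype V₁] [Fintype W₂]
    {Γ : V₂ → W₁ → V₁ → W₂ → ℝ} (hΓ : IsLocalCorr Γ) :
    ∃ (f : V₂ → V₁) (g : W₁ → W₂), ∀ v₂ w₁, 0 < Γ v₂ w₁ (f v₂) (g w₁) := by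
  obtain ⟨n, lam, Φ, Ψ, hlam0, hlam1, hΦ, hΨ, hΓ⟩ := hΓ
  obtain ⟨i, hi⟩ := exists_pos_of_sum_eq_one hlam1
  choose f hf using fun v₂ => exists_pos_of_sum_eq_one ((hΦ i).2 v₂)
  choose g hg using fun w₁ => exists_pos_of_sum_eq_one ((hΨ i).2 w₁)
  refine ⟨f, g, fun v₂ w₁ => ?_⟩
  rw [hΓ]
  exact Finset.sum_pos'
    (fun j _ => mul_nonneg (hlam0 j) (mul_nonneg ((hΦ j).1 _ _) ((hΨ j).1 _ _)))
    ⟨i, Finset.mem_univ i, mul_pos hi (mul_pos (hf v₂) (hg w₁))⟩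

theorem localQuasiHom_iff_general {V₁ W₁ V₂ W₂ : Type*}
    [Fintype V₁] [Fintype W₂]
    (E₁ : Set (V₁ × W₁)) (E₂ : Set (V₂ × W₂)) :
    (∃ Γ : V₂ → W₁ → V₁ → W₂ → ℝ,
        IsNSCorr Γ ∧ IsLocalCorr Γ ∧ FitsQuasiHom Γ E₁ E₂) ↔
      (∃ (f : V₂ → V₁) (g : W₁ → W₂),
        ∀ v₂ w₁, (f v₂, w₁) ∈ E₁ → (v₂, g w₁) ∈ E₂) := by
  classical
  constructor
  · rintro ⟨Γ, -, hloc, hfit⟩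
    obtain ⟨f, g, hpos⟩ := hloc.exists_pos_apply
    exact ⟨f, g, fun v₂ w₁ => hfit v₂ w₁ _ _ (hpos v₂ w₁)⟩
  · rintro ⟨f, g, hfg⟩
    have hf := isChannel_detChannel f
    have hg := isChannel_detChannel g
    exact ⟨_, hf.isNSCorr_prodCorr hg, hf.isLocalCorr_prodCorr hg,
      fitsQuasiHom_prodCorr_detChannel hfg⟩

/-- A local NS correlation fits `E₁ ⇝ E₂` iff there is a (classical) quasi-homomorphism,
i.e. functions `f, g` with `(f v₂, w₁) ∈ E₁ ⟹ (v₂, g w₁) ∈ E₂`. -/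
theorem localQuasiHom_iff {V₁ W₁ V₂ W₂ : Type*}
    [Fintype V₁] [Fintype W₁] [Fintype V₂] [Fintype W₂]
    (E₁ : Set (V₁ × W₁)) (E₂ : Set (V₂ × W₂)) :
    (∃ Γ : V₂ → W₁ → V₁ → W₂ → ℝ,
        IsNSCorr Γ ∧ IsLocalCorr Γ ∧ FitsQuasiHom Γ E₁ E₂) ↔
      (∃ (f : V₂ → V₁) (g : W₁ → W₂),
        ∀ v₂ w₁, (f v₂, w₁) ∈ E₁ → (v₂, g w₁) ∈ E₂) :=
  localQuasiHom_iff_general E₁ E₂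
end

section
/- Let V and W be finite sets, E₁, E₂ ⊆ V×W be hypergraphs and 𝔈₁, 𝔈₂ sets of channels from V to W. Suppose Γ is an NS bicorrelation over (V,W,V,W) fitting the game E₁↔E₂, such that Γ[𝓔] ∈ 𝔈₂ for every 𝓔 ∈ 𝔈₁ and Γ*[𝓕] ∈ 𝔈₁ for every 𝓕 ∈ 𝔈₂. Let π be a Γ-stationary probability distribution on V. Then ω_{𝔈₁}(E₁,π) = ω_{𝔈₂}(E₂,π). -/
/-- The dual correlation `Γ*`, with `Γ*(v₂,w₁|v₁,w₂) = Γ(v₁,w₂|v₂,w₁)`. -/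
def nsDual {V₂ W₁ V₁ W₂ : Type*} (Γ : V₂ → W₁ → V₁ → W₂ → ℝ) :
    V₁ → W₂ → V₂ → W₁ → ℝ :=
  fun v₁ w₂ v₂ w₁ => Γ v₂ w₁ v₁ w₂

/-- An NS bicorrelation over `(V, W, V, W)`: a unital NS correlation whose dual is
again an NS correlation. -/
def IsNSBicorr {V W : Type*} [Fintype V] [Fintype W]
    (Γ : V → W → V → W → ℝ) : Prop :=
  IsNSCorr Γ ∧ (∀ v₁ w₂, ∑ v₂, ∑ w₁, Γ v₂ w₁ v₁ w₂ = 1) ∧ IsNSCorr (nsDual Γ)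

/-- `Γ` fits the isomorphism game `E₁ ↔ E₂`. -/
def FitsHom {V₁ W₁ V₂ W₂ : Type*} (Γ : V₂ → W₁ → V₁ → W₂ → ℝ)
    (E₁ : Set (V₁ × W₁)) (E₂ : Set (V₂ × W₂)) : Prop :=
  ∀ v₂ w₁ v₁ w₂, 0 < Γ v₂ w₁ v₁ w₂ → ((v₁, w₁) ∈ E₁ ↔ (v₂, w₂) ∈ E₂)

/-- The simulated channel `Γ[𝓔]`. -/
def simulate {V₂ W₁ V₁ W₂ : Type*} [Fintype V₁] [Fintype W₁]
    (Γ : V₂ → W₁ → V₁ → W₂ → ℝ) (E : V₁ → W₁ → ℝ) : V₂ → W₂ → ℝ :=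
  fun v₂ w₂ => ∑ v₁, ∑ w₁, Γ v₂ w₁ v₁ w₂ * E v₁ w₁

/-- The value `ω_𝔈(E, π)`. -/
noncomputable def omegaVal {V W : Type*} [Fintype V] [Fintype W]
    (E : Set (V × W)) (π : V → ℝ) (𝔈 : Set (V → W → ℝ)) : ℝ :=
  sSup ((fun 𝓔 => ∑ v, ∑ w, Set.indicator E (fun q => π q.1 * 𝓔 q.1 q.2) (v, w)) '' 𝔈)


/-! Simulating a strategy through `Γ` does not change its winning probability. Since `Γ` fits
`E₁ ↔ E₂`, every quadruple `(v₂, w₁, v₁, w₂)` with `Γ(v₁,w₂|v₂,w₁) > 0` wins both games or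
neither, so the indicator of `E₂` at `(v₂, w₂)` may be traded for that of `E₁` at `(v₁, w₁)`;
stationarity of `π` then collapses the remaining average over `Γ` back to `π`. Hence `Γ[·]` and
`Γ*[·]` map the values attained on `𝔈₁` and on `𝔈₂` onto each other. -/

open Finset

noncomputable def winProb {V W : Type*} [Fintype V] [Fintype W]
    (E : Set (V × W)) (π : V → ℝ) (𝓔 : V → W → ℝ) : ℝ :=
  ∑ v, ∑ w, E.indicator (fun q => π q.1 * 𝓔 q.1 q.2) (v, w)

lemma omegaVal_eq_sSup_image_winProb {V W : Type*} [Fintype V] [Fintype W]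
    (E : Set (V × W)) (π : V → ℝ) (𝔈 : Set (V → W → ℝ)) :
    omegaVal E π 𝔈 = sSup (winProb E π '' 𝔈) :=
  rfl

lemma winProb_eq_sum_indicator_one_mul {V W : Type*} [Fintype V] [Fintype W]
    (E : Set (V × W)) (π : V → ℝ) (𝓔 : V → W → ℝ) :
    winProb E π 𝓔 = ∑ v, ∑ w, E.indicator 1 (v, w) * (π v * 𝓔 v w) := by
  classical
  simp only [winProb, Set.indicator_apply, Pi.one_apply, ite_mul, one_mul, zero_mul]

lemma sum_sum_sum_sum_comm {α β γ δ M : Type*} [Fintype α] [Fintype β] [Fintype γ]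
    [Fintype δ] [AddCommMonoid M] (f : α → β → γ → δ → M) :
    ∑ a, ∑ b, ∑ c, ∑ d, f a b c d = ∑ c, ∑ d, ∑ a, ∑ b, f a b c d := by
  calc ∑ a, ∑ b, ∑ c, ∑ d, f a b c d
      = ∑ p : α × β, ∑ q : γ × δ, f p.1 p.2 q.1 q.2 := by simp only [Fintype.sum_prod_type]
    _ = ∑ q : γ × δ, ∑ p : α × β, f p.1 p.2 q.1 q.2 := Finset.sum_comm
    _ = ∑ c, ∑ d, ∑ a, ∑ b, f a b c d := by simp only [Fintype.sum_prod_type]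

section Fits

variable {V₁ W₁ V₂ W₂ : Type*} {Γ : V₂ → W₁ → V₁ → W₂ → ℝ}
  {E₁ : Set (V₁ × W₁)} {E₂ : Set (V₂ × W₂)}

lemma FitsHom.nsDual (hfit : FitsHom Γ E₁ E₂) : FitsHom (nsDual Γ) E₂ E₁ :=
  fun v₁ w₂ v₂ w₁ h => (hfit v₂ w₁ v₁ w₂ h).symm

lemma FitsHom.indicator_one_mul_eq (hΓ : ∀ v₂ w₁ v₁ w₂, 0 ≤ Γ v₂ w₁ v₁ w₂)
    (hfit : FitsHom Γ E₁ E₂) (v₂ : V₂) (w₁ : W₁) (v₁ : V₁) (w₂ : W₂) :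
    E₂.indicator 1 (v₂, w₂) * Γ v₂ w₁ v₁ w₂ =
      E₁.indicator (1 : V₁ × W₁ → ℝ) (v₁, w₁) * Γ v₂ w₁ v₁ w₂ := by
  classical
  rcases (hΓ v₂ w₁ v₁ w₂).eq_or_lt with h | h
  · rw [← h, mul_zero, mul_zero]
  · simp only [Set.indicator_apply, Pi.one_apply, hfit v₂ w₁ v₁ w₂ h]

theorem FitsHom.winProb_simulate [Fintype V₁] [Fintype W₁] [Fintype V₂] [Fintype W₂]
    (hΓ : ∀ v₂ w₁ v₁ w₂, 0 ≤ Γ v₂ w₁ v₁ w₂) (hfit : FitsHom Γ E₁ E₂)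
    {π₁ : V₁ → ℝ} {π₂ : V₂ → ℝ} (hπ : ∀ w₁ v₁, π₁ v₁ = ∑ v₂, (∑ w₂, Γ v₂ w₁ v₁ w₂) * π₂ v₂)
    (𝓔 : V₁ → W₁ → ℝ) :
    winProb E₂ π₂ (simulate Γ 𝓔) = winProb E₁ π₁ 𝓔 := by
  calc winProb E₂ π₂ (simulate Γ 𝓔)
      = ∑ v₂, ∑ w₂, ∑ v₁, ∑ w₁,
          E₂.indicator 1 (v₂, w₂) * Γ v₂ w₁ v₁ w₂ * (π₂ v₂ * 𝓔 v₁ w₁) := by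
        simp only [winProb_eq_sum_indicator_one_mul, simulate, mul_sum]
        refine sum_congr rfl fun _ _ => sum_congr rfl fun _ _ => sum_congr rfl fun _ _ =>
          sum_congr rfl fun _ _ => by ring
    _ = ∑ v₂, ∑ w₂, ∑ v₁, ∑ w₁,
          E₁.indicator 1 (v₁, w₁) * Γ v₂ w₁ v₁ w₂ * (π₂ v₂ * 𝓔 v₁ w₁) := by
        simp only [hfit.indicator_one_mul_eq hΓ _ _ _ _]
    _ = ∑ v₁, ∑ w₁,
          E₁.indicator 1 (v₁, w₁) * ((∑ v₂, (∑ w₂, Γ v₂ w₁ v₁ w₂) * π₂ v₂) * 𝓔 v₁ w₁) := by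
        rw [sum_sum_sum_sum_comm]
        simp only [mul_sum, sum_mul]
        refine sum_congr rfl fun _ _ => sum_congr rfl fun _ _ => sum_congr rfl fun _ _ =>
          sum_congr rfl fun _ _ => by ring
    _ = winProb E₁ π₁ 𝓔 := by
        simp only [winProb_eq_sum_indicator_one_mul, ← hπ]

end Fits

lemma image_eq_image_of_mapsTo {α β γ : Type*} {f : α → γ} {g : β → γ} {s : Set α} {t : Set β}
    {φ : α → β} {ψ : β → α} (hφ : Set.MapsTo φ s t) (hψ : Set.MapsTo ψ t s)
    (hgφ : ∀ a, g (φ a) = f a) (hfψ : ∀ b, f (ψ b) = g b) :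
    f '' s = g '' t := by
  apply Set.Subset.antisymm
  · rintro _ ⟨a, ha, rfl⟩
    exact ⟨φ a, hφ ha, hgφ a⟩
  · rintro _ ⟨b, hb, rfl⟩
    exact ⟨ψ b, hψ hb, hfψ b⟩

theorem omegaVal_eq_of_iso_general {V W : Type*} [Fintype V] [Fintype W]
    (E₁ E₂ : Set (V × W))
    (𝔈₁ 𝔈₂ : Set (V → W → ℝ))
    (Γ : V → W → V → W → ℝ) (hΓ : IsNSBicorr Γ) (hfit : FitsHom Γ E₁ E₂)
    (hsim : ∀ E ∈ 𝔈₁, simulate Γ E ∈ 𝔈₂)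
    (hsim' : ∀ F ∈ 𝔈₂, simulate (nsDual Γ) F ∈ 𝔈₁)
    (π : V → ℝ)
    (hstat : ∀ w₁ v, π v = ∑ v', (∑ w₂, Γ v' w₁ v w₂) * π v')
    (hstat' : ∀ w₂ v, π v = ∑ v', (∑ w₁, Γ v w₁ v' w₂) * π v') :
    omegaVal E₁ π 𝔈₁ = omegaVal E₂ π 𝔈₂ := by
  have hΓ_nonneg := hΓ.1.1
  rw [omegaVal_eq_sSup_image_winProb, omegaVal_eq_sSup_image_winProb,
    image_eq_image_of_mapsTo hsim hsim' (hfit.winProb_simulate hΓ_nonneg hstat)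
      (hfit.nsDual.winProb_simulate (fun v₁ w₂ v₂ w₁ => hΓ_nonneg v₂ w₁ v₁ w₂) hstat')]

/-- If `Γ` is an NS bicorrelation fitting `E₁ ↔ E₂` with `Γ[𝔈₁] ⊆ 𝔈₂` and
`Γ*[𝔈₂] ⊆ 𝔈₁`, and `π` is `Γ`-stationary, then `ω_{𝔈₁}(E₁, π) = ω_{𝔈₂}(E₂, π)`. -/
theorem omegaVal_eq_of_iso {V W : Type*} [Fintype V] [Fintype W]
    (E₁ E₂ : Set (V × W))
    (𝔈₁ 𝔈₂ : Set (V → W → ℝ))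
    (h𝔈₁ : ∀ E ∈ 𝔈₁, IsChannel E) (h𝔈₂ : ∀ E ∈ 𝔈₂, IsChannel E)
    (Γ : V → W → V → W → ℝ) (hΓ : IsNSBicorr Γ) (hfit : FitsHom Γ E₁ E₂)
    (hsim : ∀ E ∈ 𝔈₁, simulate Γ E ∈ 𝔈₂)
    (hsim' : ∀ F ∈ 𝔈₂, simulate (nsDual Γ) F ∈ 𝔈₁)
    (π : V → ℝ) (hπpos : ∀ v, 0 ≤ π v) (hπsum : ∑ v, π v = 1)
    (hstat : ∀ w₁ v, π v = ∑ v', (∑ w₂, Γ v' w₁ v w₂) * π v')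
    (hstat' : ∀ w₂ v, π v = ∑ v', (∑ w₁, Γ v w₁ v' w₂) * π v') :
    omegaVal E₁ π 𝔈₁ = omegaVal E₂ π 𝔈₂ :=
  omegaVal_eq_of_iso_general E₁ E₂ 𝔈₁ 𝔈₂ Γ hΓ hfit hsim hsim' π hstat hstat'
end

section
/- Let X and Y be finite sets, Γ an SNS bicorrelation over (X×Y, X×Y, X×Y, X×Y), and 𝓔 an NS bicorrelation over (X,Y,X,Y). Then Γ[𝓔]* = Γ*[𝓔*], and Γ[𝓔] is an NS bicorrelation over (X,Y,X,Y). -/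
/-!
Summing `Γ[𝓔](a₂,b₂|x₂,y₂)` over `b₂` moves the sum onto `Γ`, whose `b₂`-marginal does not depend
on `b₁`; so `𝓔` enters only through its marginal `Σ_{b₁} 𝓔(a₁,b₁|x₁,y₁)`, which does not depend on
`y₁`, and what is left of `Γ` is its `y₁`-marginal, which does not depend on `y₂`. The other
no-signalling conditions and the normalization are alike. The identity `Γ[𝓔]* = Γ*[𝓔*]` is a
reindexing of the defining sum, so the same argument applied to the SNS correlation `Γ*` and the NS
correlation `𝓔*` shows that `Γ[𝓔]*` is an NS correlation, whose normalization is the unitality of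
`Γ[𝓔]`.
-/

/-- An NS correlation over `(X, Y, X, Y)`: `p x y a b` stands for `p(a,b|x,y)`. -/
def IsNSCorr4 {X Y A B : Type*} [Fintype A] [Fintype B]
    (p : X → Y → A → B → ℝ) : Prop :=
  (∀ x y a b, 0 ≤ p x y a b) ∧
  (∀ x y, ∑ a, ∑ b, p x y a b = 1) ∧
  (∀ x y y' a, ∑ b, p x y a b = ∑ b, p x y' a b) ∧
  (∀ x x' y b, ∑ a, p x y a b = ∑ a, p x' y a b)

/-- The dual `p*` of a correlation over `(X, Y, X, Y)`: `p*(x,y|a,b) = p(a,b|x,y)`. -/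
def dual4 {X Y : Type*} (p : X → Y → X → Y → ℝ) : X → Y → X → Y → ℝ :=
  fun a b x y => p x y a b

/-- An NS bicorrelation over `(X, Y, X, Y)`: a unital NS correlation whose dual is
again an NS correlation. -/
def IsNSBicorr4 {X Y : Type*} [Fintype X] [Fintype Y]
    (p : X → Y → X → Y → ℝ) : Prop :=
  IsNSCorr4 p ∧ (∀ a b, ∑ x, ∑ y, p x y a b = 1) ∧ IsNSCorr4 (dual4 p)

/-- A strongly no-signalling (SNS) correlation over `(X×Y, X×Y, X×Y, X×Y)`. -/
def IsSNSCorr {X₂ Y₂ A₁ B₁ X₁ Y₁ A₂ B₂ : Type*}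
    [Fintype X₁] [Fintype Y₁] [Fintype A₂] [Fintype B₂]
    (Γ : X₂ → Y₂ → A₁ → B₁ → X₁ → Y₁ → A₂ → B₂ → ℝ) : Prop :=
  (∀ x₂ y₂ a₁ b₁ x₁ y₁ a₂ b₂, 0 ≤ Γ x₂ y₂ a₁ b₁ x₁ y₁ a₂ b₂) ∧
  (∀ x₂ y₂ a₁ b₁, ∑ x₁, ∑ y₁, ∑ a₂, ∑ b₂, Γ x₂ y₂ a₁ b₁ x₁ y₁ a₂ b₂ = 1) ∧
  (∀ x₂ y₂ a₁ b₁ b₁' x₁ y₁ a₂,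
    ∑ b₂, Γ x₂ y₂ a₁ b₁ x₁ y₁ a₂ b₂ = ∑ b₂, Γ x₂ y₂ a₁ b₁' x₁ y₁ a₂ b₂) ∧
  (∀ x₂ y₂ a₁ a₁' b₁ x₁ y₁ b₂,
    ∑ a₂, Γ x₂ y₂ a₁ b₁ x₁ y₁ a₂ b₂ = ∑ a₂, Γ x₂ y₂ a₁' b₁ x₁ y₁ a₂ b₂) ∧
  (∀ x₂ y₂ y₂' a₁ b₁ x₁ a₂ b₂,
    ∑ y₁, Γ x₂ y₂ a₁ b₁ x₁ y₁ a₂ b₂ = ∑ y₁, Γ x₂ y₂' a₁ b₁ x₁ y₁ a₂ b₂) ∧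
  (∀ x₂ x₂' y₂ a₁ b₁ y₁ a₂ b₂,
    ∑ x₁, Γ x₂ y₂ a₁ b₁ x₁ y₁ a₂ b₂ = ∑ x₁, Γ x₂' y₂ a₁ b₁ x₁ y₁ a₂ b₂)

/-- The dual `Γ*` of an SNS correlation over `(X×Y, X×Y, X×Y, X×Y)`:
`Γ*(x₂y₂, a₁b₁ | x₁y₁, a₂b₂) = Γ(x₁y₁, a₂b₂ | x₂y₂, a₁b₁)`. -/
def dualSNS {X Y : Type*} (Γ : X → Y → X → Y → X → Y → X → Y → ℝ) :
    X → Y → X → Y → X → Y → X → Y → ℝ :=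
  fun x₁ y₁ a₂ b₂ x₂ y₂ a₁ b₁ => Γ x₂ y₂ a₁ b₁ x₁ y₁ a₂ b₂

/-- An SNS bicorrelation: a unital SNS correlation whose dual is again SNS. -/
def IsSNSBicorr {X Y : Type*} [Fintype X] [Fintype Y]
    (Γ : X → Y → X → Y → X → Y → X → Y → ℝ) : Prop :=
  IsSNSCorr Γ ∧
  (∀ x₁ y₁ a₂ b₂, ∑ x₂, ∑ y₂, ∑ a₁, ∑ b₁, Γ x₂ y₂ a₁ b₁ x₁ y₁ a₂ b₂ = 1) ∧
  IsSNSCorr (dualSNS Γ)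

/-- The simulated correlation `Γ[𝓔]`. -/
def simulateSNS {X₂ Y₂ A₁ B₁ X₁ Y₁ A₂ B₂ : Type*}
    [Fintype X₁] [Fintype Y₁] [Fintype A₁] [Fintype B₁]
    (Γ : X₂ → Y₂ → A₁ → B₁ → X₁ → Y₁ → A₂ → B₂ → ℝ)
    (E : X₁ → Y₁ → A₁ → B₁ → ℝ) : X₂ → Y₂ → A₂ → B₂ → ℝ :=
  fun x₂ y₂ a₂ b₂ => ∑ x₁, ∑ y₁, ∑ a₁, ∑ b₁, Γ x₂ y₂ a₁ b₁ x₁ y₁ a₂ b₂ * E x₁ y₁ a₁ b₁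

open Finset

theorem Fintype.sum_mul_eq_sum_mul_of_forall_eq {R ι : Type*} [NonUnitalNonAssocSemiring R]
    [Fintype ι] {f g g' : ι → R} (hf : ∀ i j, f i = f j) (hg : ∑ i, g i = ∑ i, g' i) :
    ∑ i, g i * f i = ∑ i, g' i * f i := by
  rcases isEmpty_or_nonempty ι with hι | ⟨⟨i₀⟩⟩
  · simp
  · simp only [fun i => hf i i₀, ← sum_mul, hg]

theorem Fintype.sum_comm_pairs {M α β γ δ : Type*} [AddCommMonoid M] [Fintype α] [Fintype β]
    [Fintype γ] [Fintype δ] (f : α → β → γ → δ → M) :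
    ∑ a, ∑ b, ∑ c, ∑ d, f a b c d = ∑ c, ∑ d, ∑ a, ∑ b, f a b c d := by
  simp only [sum_comm (s := (univ : Finset α))]
  simp only [sum_comm (s := (univ : Finset β))]

theorem isNSBicorr4_iff {X Y : Type*} [Fintype X] [Fintype Y] {p : X → Y → X → Y → ℝ} :
    IsNSBicorr4 p ↔ IsNSCorr4 p ∧ IsNSCorr4 (dual4 p) :=
  ⟨fun h => ⟨h.1, h.2.2⟩, fun h => ⟨h.1, h.2.2.1, h.2⟩⟩

theorem isNSCorr4_of_isEmpty {X Y A B : Type*} [Fintype A] [Fintype B] (h : IsEmpty X ∨ IsEmpty Y)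
    (p : X → Y → A → B → ℝ) : IsNSCorr4 p := by
  rcases h with h | h <;> simp [IsNSCorr4]

section Simulation

variable {X₂ Y₂ A₁ B₁ X₁ Y₁ A₂ B₂ : Type*} [Fintype X₁] [Fintype Y₁] [Fintype A₂] [Fintype B₂]
  {Γ : X₂ → Y₂ → A₁ → B₁ → X₁ → Y₁ → A₂ → B₂ → ℝ}

theorem IsSNSCorr.sum_sum_output_eq (hΓ : IsSNSCorr Γ) (x₂ : X₂) (y₂ : Y₂) (a₁ a₁' : A₁) (b₁ b₁' : B₁)
    (x₁ : X₁) (y₁ : Y₁) :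
    ∑ a₂, ∑ b₂, Γ x₂ y₂ a₁ b₁ x₁ y₁ a₂ b₂ = ∑ a₂, ∑ b₂, Γ x₂ y₂ a₁' b₁' x₁ y₁ a₂ b₂ := by
  obtain ⟨-, -, hb, ha, -⟩ := hΓ
  rw [sum_congr rfl fun a₂ _ => hb x₂ y₂ a₁ b₁ b₁' x₁ y₁ a₂, sum_comm, sum_comm (γ := A₂)]
  exact sum_congr rfl fun b₂ _ => ha x₂ y₂ a₁ a₁' b₁' x₁ y₁ b₂

/-- `Γ` with the question pair and the answer pair exchanged on both sides: `swapSNS (dualSNS Γ)`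
is `Γ*` with its arguments in the order `simulateSNS` expects. -/
def swapSNS (Γ : X₂ → Y₂ → A₁ → B₁ → X₁ → Y₁ → A₂ → B₂ → ℝ) :
    A₁ → B₁ → X₂ → Y₂ → A₂ → B₂ → X₁ → Y₁ → ℝ :=
  fun a₁ b₁ x₂ y₂ a₂ b₂ x₁ y₁ => Γ x₂ y₂ a₁ b₁ x₁ y₁ a₂ b₂

theorem IsSNSCorr.swapSNS (hΓ : IsSNSCorr Γ) : IsSNSCorr (swapSNS Γ) := by
  obtain ⟨h0, h1, hb, ha, hy, hx⟩ := hΓ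
  refine ⟨fun _ _ _ _ _ _ _ _ => h0 .., fun a₁ b₁ x₂ y₂ => ?_, fun a₁ b₁ x₂ y₂ y₂' a₂ b₂ x₁ =>
    hy x₂ y₂ y₂' a₁ b₁ x₁ a₂ b₂, fun a₁ b₁ x₂ x₂' y₂ a₂ b₂ y₁ => hx x₂ x₂' y₂ a₁ b₁ y₁ a₂ b₂,
    fun a₁ b₁ b₁' x₂ y₂ a₂ x₁ y₁ => hb x₂ y₂ a₁ b₁ b₁' x₁ y₁ a₂,
    fun a₁ a₁' b₁ x₂ y₂ b₂ x₁ y₁ => ha x₂ y₂ a₁ a₁' b₁ x₁ y₁ b₂⟩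
  rw [← h1 x₂ y₂ a₁ b₁]
  exact Fintype.sum_comm_pairs _

variable [Fintype A₁] [Fintype B₁] {E : X₁ → Y₁ → A₁ → B₁ → ℝ}

theorem IsSNSCorr.sum_sum_simulateSNS [Nonempty A₁] [Nonempty B₁] (hΓ : IsSNSCorr Γ)
    (hE : IsNSCorr4 E) (x₂ : X₂) (y₂ : Y₂) : ∑ a₂, ∑ b₂, simulateSNS Γ E x₂ y₂ a₂ b₂ = 1 := by
  obtain ⟨a₀⟩ := ‹Nonempty A₁›
  obtain ⟨b₀⟩ := ‹Nonempty B₁›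
  calc ∑ a₂, ∑ b₂, simulateSNS Γ E x₂ y₂ a₂ b₂
      = ∑ x₁, ∑ y₁, ∑ a₁, ∑ b₁, (∑ a₂, ∑ b₂, Γ x₂ y₂ a₁ b₁ x₁ y₁ a₂ b₂) * E x₁ y₁ a₁ b₁ := by
        simp only [simulateSNS, sum_mul]
        simp only [sum_comm (s := (univ : Finset A₂))]
        simp only [sum_comm (s := (univ : Finset B₂))]
    _ = ∑ x₁, ∑ y₁, (∑ a₂, ∑ b₂, Γ x₂ y₂ a₀ b₀ x₁ y₁ a₂ b₂) * ∑ a₁, ∑ b₁, E x₁ y₁ a₁ b₁ := by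
        simp only [hΓ.sum_sum_output_eq x₂ y₂ _ a₀ _ b₀, mul_sum]
    _ = 1 := by simp only [hE.2.1, mul_one, hΓ.2.1]

theorem IsSNSCorr.sum_simulateSNS_right_eq [Nonempty B₁] (hΓ : IsSNSCorr Γ) (hE : IsNSCorr4 E)
    (x₂ : X₂) (y₂ y₂' : Y₂) (a₂ : A₂) :
    ∑ b₂, simulateSNS Γ E x₂ y₂ a₂ b₂ = ∑ b₂, simulateSNS Γ E x₂ y₂' a₂ b₂ := by
  obtain ⟨-, -, hb, -, hy, -⟩ := hΓ
  obtain ⟨b₀⟩ := ‹Nonempty B₁›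
  have marginal : ∀ y, ∑ b₂, simulateSNS Γ E x₂ y a₂ b₂ =
      ∑ x₁, ∑ a₁, ∑ y₁, (∑ b₂, Γ x₂ y a₁ b₀ x₁ y₁ a₂ b₂) * ∑ b₁, E x₁ y₁ a₁ b₁ := by
    intro y
    simp only [simulateSNS, sum_mul]
    simp only [sum_comm (s := (univ : Finset B₂))]
    simp only [← sum_mul, hb x₂ y _ _ b₀, ← mul_sum]
    simp only [sum_comm (s := (univ : Finset Y₁))]
  rw [marginal, marginal]
  refine sum_congr rfl fun x₁ _ => sum_congr rfl fun a₁ _ => ?_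
  refine Fintype.sum_mul_eq_sum_mul_of_forall_eq (fun y₁ y₁' => hE.2.2.1 x₁ y₁ y₁' a₁) ?_
  rw [sum_comm, sum_comm (γ := Y₁)]
  exact sum_congr rfl fun b₂ _ => hy x₂ y₂ y₂' a₁ b₀ x₁ a₂ b₂

theorem IsSNSCorr.sum_simulateSNS_left_eq [Nonempty A₁] (hΓ : IsSNSCorr Γ) (hE : IsNSCorr4 E)
    (x₂ x₂' : X₂) (y₂ : Y₂) (b₂ : B₂) :
    ∑ a₂, simulateSNS Γ E x₂ y₂ a₂ b₂ = ∑ a₂, simulateSNS Γ E x₂' y₂ a₂ b₂ := by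
  obtain ⟨-, -, -, ha, -, hx⟩ := hΓ
  obtain ⟨a₀⟩ := ‹Nonempty A₁›
  have marginal : ∀ x, ∑ a₂, simulateSNS Γ E x y₂ a₂ b₂ =
      ∑ y₁, ∑ b₁, ∑ x₁, (∑ a₂, Γ x y₂ a₀ b₁ x₁ y₁ a₂ b₂) * ∑ a₁, E x₁ y₁ a₁ b₁ := by
    intro x
    simp only [simulateSNS, sum_mul]
    simp only [sum_comm (s := (univ : Finset A₂))]
    simp only [← sum_mul]
    simp only [sum_comm (s := (univ : Finset A₁))]
    simp only [ha x y₂ _ a₀, ← mul_sum]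
    simp only [sum_comm (s := (univ : Finset X₁))]
  rw [marginal, marginal]
  refine sum_congr rfl fun y₁ _ => sum_congr rfl fun b₁ _ => ?_
  refine Fintype.sum_mul_eq_sum_mul_of_forall_eq (fun x₁ x₁' => hE.2.2.2 x₁ x₁' y₁ b₁) ?_
  rw [sum_comm, sum_comm (γ := X₁)]
  exact sum_congr rfl fun a₂ _ => hx x₂ x₂' y₂ a₀ b₁ y₁ a₂ b₂

theorem IsSNSCorr.isNSCorr4_simulateSNS [Nonempty A₁] [Nonempty B₁] (hΓ : IsSNSCorr Γ)
    (hE : IsNSCorr4 E) : IsNSCorr4 (simulateSNS Γ E) :=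
  ⟨fun _ _ _ _ => sum_nonneg fun _ _ => sum_nonneg fun _ _ => sum_nonneg fun _ _ =>
      sum_nonneg fun _ _ => mul_nonneg (hΓ.1 ..) (hE.1 ..),
    hΓ.sum_sum_simulateSNS hE, hΓ.sum_simulateSNS_right_eq hE, hΓ.sum_simulateSNS_left_eq hE⟩

end Simulation

theorem dual4_simulateSNS {X Y : Type*} [Fintype X] [Fintype Y]
    (Γ : X → Y → X → Y → X → Y → X → Y → ℝ) (E : X → Y → X → Y → ℝ) :
    dual4 (simulateSNS Γ E) = simulateSNS (swapSNS (dualSNS Γ)) (dual4 E) := by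
  funext a₂ b₂ x₂ y₂
  exact Fintype.sum_comm_pairs _

/-- For an SNS bicorrelation `Γ` and an NS bicorrelation `𝓔`, one has
`Γ[𝓔]* = Γ*[𝓔*]` and `Γ[𝓔]` is an NS bicorrelation. -/
theorem simulateSNS_bicorr {X Y : Type*} [Fintype X] [Fintype Y]
    (Γ : X → Y → X → Y → X → Y → X → Y → ℝ) (hΓ : IsSNSBicorr Γ)
    (E : X → Y → X → Y → ℝ) (hE : IsNSBicorr4 E) :
    (∀ x₂ y₂ a₂ b₂,
      dual4 (simulateSNS Γ E) a₂ b₂ x₂ y₂ =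
        ∑ a₁, ∑ b₁, ∑ x₁, ∑ y₁,
          dualSNS Γ x₁ y₁ a₂ b₂ x₂ y₂ a₁ b₁ * dual4 E a₁ b₁ x₁ y₁) ∧
    IsNSBicorr4 (simulateSNS Γ E) := by
  obtain ⟨hΓ, -, hΓdual⟩ := hΓ
  obtain ⟨hE, -, hEdual⟩ := hE
  refine ⟨fun x₂ y₂ a₂ b₂ => by rw [dual4_simulateSNS]; rfl, isNSBicorr4_iff.mpr ?_⟩
  rw [dual4_simulateSNS]
  rcases isEmpty_or_nonempty X with hX | hX
  · exact ⟨isNSCorr4_of_isEmpty (.inl hX) _, isNSCorr4_of_isEmpty (.inl hX) _⟩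
  rcases isEmpty_or_nonempty Y with hY | hY
  · exact ⟨isNSCorr4_of_isEmpty (.inr hY) _, isNSCorr4_of_isEmpty (.inr hY) _⟩
  exact ⟨hΓ.isNSCorr4_simulateSNS hE, hΓdual.swapSNS.isNSCorr4_simulateSNS hEdual⟩
end
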